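/- (Sufficiency of rationality for limit cycles.) Consider the switched quantized control system with parameter α satisfying 1 < α < 3/2 and disturbance rounding error Δ_d with |Δ_d| = n/m ≤ 1/2, where n and m are coprime natural numbers with 1 ≤ n < m. If condition (9) holds at some time k, then there exists k̄ > k such that for all j ≥ k̄ one has e(j+m) = e(j) and ū(j+m) = ū(j), and in each window of m consecutive times j ∈ {k̄, …, k̄+m−1} the quantized error ρ(e(j)) equals sign(Δ_d) for exactly n indices j and equals 0 for the remaining m − n indices; that is, the system evolves on an n-periodic limit cycle of period m. -/

import Mathlib

/-!
By the symmetry `(e, ū, Δ_d) ↦ (-e, -ū, -Δ_d)` we may take `d = Δ_d = n/m > 0`. The set of states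
`d - 1/2 ≤ e < 1/2 + d`, `ū = -α ρ(e)` is invariant: on it `ρ(e) ∈ {0, 1}`, `ρ(ū) = -ρ(e)` and
`e(j+1) = e(j) + d - ρ(e(j))`. Condition (9) puts the state into this set within two steps, since
`ρ(e(k)) = ρ(ū(k)) = 0` and, should the controller fire at `k + 1`, `1 ≤ α - ū(k) < 3/2` makes
`ρ(ū(k+1)) = -1`. Over `m` steps on the invariant set `e` changes by the integer
`n - #{j : ρ(e(j)) = 1}`, while both ends lie in a half-open interval of length one; so that integer
vanishes, `e` is `m`-periodic, and so is `ū = -α ρ(e)`.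
-/

/-- Sign function: 1 for positive, 0 for zero, -1 for negative. -/
noncomputable def rsign (z : ℝ) : ℤ :=
  if 0 < z then 1 else if z = 0 then 0 else -1

/-- Rounding operator: rounds to the nearest integer, ties away from zero. -/
noncomputable def rho (z : ℝ) : ℤ :=
  if Int.fract |z| < 1/2 then rsign z * ⌊|z|⌋ else rsign z * (⌊|z|⌋ + 1)

/-- The switched quantized control system with parameter `α` and disturbance
rounding error `Δd`, with state trajectory `(e, u)`. -/
def Traj (α Δd : ℝ) (e u : ℕ → ℝ) : Prop :=
  ∀ k : ℕ,
    e (k+1) = e k + (rho (u k) : ℝ) + Δd ∧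
    u (k+1) = if rho (e (k+1)) = 0
      then ((rho (u k) : ℝ) + (rho (e k) : ℝ))
      else (u k + (rho (e k) : ℝ) - α * (rho (e (k+1)) : ℝ))

/-- Condition (9) at time `k`. -/
def Cond9 (α Δd : ℝ) (e u : ℕ → ℝ) (k : ℕ) : Prop :=
  (-(1/2) < e k ∧ e k < 1/2) ∧
  (1 ≤ α - u k * (rsign Δd : ℝ) ∧ α - u k * (rsign Δd : ℝ) < 3/2) ∧
  (-(1/2) < u k ∧ u k < 1/2)

lemma rsign_neg (z : ℝ) : rsign (-z) = -rsign z := by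
  unfold rsign
  rcases lt_trichotomy z 0 with h | rfl | h
  · rw [if_pos (neg_pos.2 h), if_neg h.not_gt, if_neg h.ne, neg_neg]
  · simp
  · rw [if_neg (by linarith), if_neg (by linarith), if_pos h]

lemma rho_neg (z : ℝ) : rho (-z) = -rho z := by
  unfold rho
  rw [abs_neg, rsign_neg]
  split_ifs <;> ring

lemma rho_eq_round_of_nonneg {z : ℝ} (hz : 0 ≤ z) : rho z = round z := by
  unfold rho
  rw [abs_of_nonneg hz, round_eq]
  rcases hz.eq_or_lt with rfl | hpos
  · norm_num [rsign]
  rw [show rsign z = 1 from if_pos hpos, one_mul, one_mul]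
  have hz := Int.floor_add_fract z
  have := Int.fract_lt_one z
  split_ifs with h <;> symm <;> rw [Int.floor_eq_iff] <;> push_cast <;>
    constructor <;> linarith [Int.fract_nonneg z]

lemma rho_eq_zero {z : ℝ} (h : |z| < 1/2) : rho z = 0 := by
  wlog hz : 0 ≤ z generalizing z
  · simpa [rho_neg] using this (z := -z) (by rwa [abs_neg]) (by linarith)
  rw [rho_eq_round_of_nonneg hz, round_eq_zero_iff]
  rw [abs_of_nonneg hz] at h
  exact ⟨by linarith, h⟩

lemma rho_eq_one {z : ℝ} (h₁ : 1/2 ≤ z) (h₂ : z < 3/2) : rho z = 1 := by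
  rw [rho_eq_round_of_nonneg (by linarith), round_eq_iff]
  constructor <;> push_cast <;> linarith

lemma rho_eq_neg_one {z : ℝ} (h₁ : -(3/2) < z) (h₂ : z ≤ -(1/2)) : rho z = -1 := by
  rw [← neg_neg z, rho_neg, rho_eq_one (by linarith) (by linarith)]

lemma Traj.neg {α d : ℝ} {e u : ℕ → ℝ} (h : Traj α d e u) :
    Traj α (-d) (fun j => -e j) (fun j => -u j) := by
  intro k
  obtain ⟨he, hu⟩ := h k
  simp only [rho_neg, neg_eq_zero, Int.cast_neg]
  refine ⟨by linarith, ?_⟩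
  split_ifs at hu ⊢ <;> rw [hu] <;> ring

lemma Cond9.neg {α d : ℝ} {e u : ℕ → ℝ} {k : ℕ} (h : Cond9 α d e u k) :
    Cond9 α (-d) (fun j => -e j) (fun j => -u j) k := by
  obtain ⟨⟨he₁, he₂⟩, ⟨hs₁, hs₂⟩, ⟨hu₁, hu₂⟩⟩ := h
  simp only [Cond9, rsign_neg, Int.cast_neg, neg_mul_neg]
  exact ⟨⟨by linarith, by linarith⟩, ⟨hs₁, hs₂⟩, ⟨by linarith, by linarith⟩⟩

def OnCycle (α d : ℝ) (e u : ℕ → ℝ) (j : ℕ) : Prop :=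
  d - 1/2 ≤ e j ∧ e j < 1/2 + d ∧ u j = -α * rho (e j)

def IsLimitCycleFrom (d : ℝ) (n m : ℕ) (e u : ℕ → ℝ) (kb : ℕ) : Prop :=
  (∀ j : ℕ, kb ≤ j → e (j+m) = e j ∧ u (j+m) = u j) ∧
  (∀ t : ℕ, kb ≤ t →
    ((Finset.Ico t (t+m)).filter (fun j => rho (e j) = rsign d)).card = n ∧
    ((Finset.Ico t (t+m)).filter (fun j => rho (e j) = 0)).card = m - n)

lemma IsLimitCycleFrom.of_neg {d : ℝ} {n m : ℕ} {e u : ℕ → ℝ} {kb : ℕ}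
    (h : IsLimitCycleFrom (-d) n m (fun j => -e j) (fun j => -u j) kb) :
    IsLimitCycleFrom d n m e u kb := by
  simpa only [IsLimitCycleFrom, neg_inj, rho_neg, rsign_neg, neg_eq_zero] using h

lemma Finset.natCast_card_filter_eq_one_eq_sum {ι : Type*} {s : Finset ι} {f : ι → ℤ}
    (hf : ∀ i ∈ s, f i = 0 ∨ f i = 1) : ((s.filter (f · = 1)).card : ℤ) = ∑ i ∈ s, f i := by
  rw [Finset.card_filter]
  push_cast
  refine Finset.sum_congr rfl fun i hi => ?_
  rcases hf i hi with h | h <;> simp [h]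

section PositiveDisturbance

variable {α d : ℝ} {e u : ℕ → ℝ} {j : ℕ}

lemma OnCycle.rho_e (hd₀ : 0 < d) (hd : d ≤ 1/2) (hj : OnCycle α d e u j) :
    (e j < 1/2 ∧ rho (e j) = 0) ∨ (1/2 ≤ e j ∧ rho (e j) = 1) := by
  obtain ⟨hlo, hhi, -⟩ := hj
  by_cases hc : 1/2 ≤ e j
  · exact .inr ⟨hc, rho_eq_one hc (by linarith)⟩
  · exact .inl ⟨not_le.1 hc, rho_eq_zero (abs_lt.2 ⟨by linarith, not_le.1 hc⟩)⟩

variable (hα₁ : 1/2 ≤ α) (hα₂ : α < 3/2) (hd₀ : 0 < d) (hd : d ≤ 1/2)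
include hα₁ hα₂ hd₀ hd

lemma OnCycle.rho_u (hj : OnCycle α d e u j) : rho (u j) = -rho (e j) := by
  rw [hj.2.2]
  rcases hj.rho_e hd₀ hd with ⟨-, hρ⟩ | ⟨-, hρ⟩ <;> rw [hρ]
  · simpa using rho_eq_zero (z := 0) (by norm_num)
  · simpa using rho_eq_neg_one (z := -α) (by linarith) (by linarith)

lemma Traj.e_succ_of_onCycle (h : Traj α d e u) (hj : OnCycle α d e u j) :
    e (j+1) = e j + d - rho (e j) := by
  rw [(h j).1, hj.rho_u hα₁ hα₂ hd₀ hd]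
  push_cast
  ring

lemma Traj.onCycle_succ (h : Traj α d e u) (hj : OnCycle α d e u j) :
    OnCycle α d e u (j+1) := by
  have he := h.e_succ_of_onCycle hα₁ hα₂ hd₀ hd hj
  have hu := (h j).2
  rw [hj.rho_u hα₁ hα₂ hd₀ hd] at hu
  have hρe := hj.rho_e hd₀ hd
  obtain ⟨hlo, hhi, huj⟩ := hj
  rcases hρe with ⟨hlt, hρ⟩ | ⟨hge, hρ⟩ <;> rw [hρ] at he hu huj <;>
    push_cast at he hu huj
  · by_cases hc : 1/2 ≤ e (j+1)
    · have hρ' := rho_eq_one hc (by linarith)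
      refine ⟨by linarith, by linarith, ?_⟩
      rw [hu, if_neg (by simp [hρ']), hρ', huj]
      simp
    · have hρ' := rho_eq_zero (abs_lt.2 ⟨by linarith, not_le.1 hc⟩)
      refine ⟨by linarith, by linarith, ?_⟩
      rw [hu, if_pos hρ', hρ']
      simp
  · have hρ' := rho_eq_zero (abs_lt.2 ⟨by linarith, by linarith⟩ : |e (j+1)| < 1/2)
    refine ⟨by linarith, by linarith, ?_⟩
    rw [hu, if_pos hρ', hρ']
    simp

lemma Traj.onCycle_add_two (h : Traj α d e u) {k : ℕ} (h9 : Cond9 α d e u k) :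
    OnCycle α d e u (k+2) := by
  obtain ⟨⟨he₁, he₂⟩, ⟨hs₁, hs₂⟩, ⟨hu₁, hu₂⟩⟩ := h9
  rw [show rsign d = 1 from if_pos hd₀, Int.cast_one, mul_one] at hs₁ hs₂
  have hρe : rho (e k) = 0 := rho_eq_zero (abs_lt.2 ⟨he₁, he₂⟩)
  have hρu : rho (u k) = 0 := rho_eq_zero (abs_lt.2 ⟨hu₁, hu₂⟩)
  obtain ⟨he, hu⟩ := h k
  rw [hρu, hρe] at hu
  rw [hρu, Int.cast_zero, add_zero] at he
  by_cases hc : 1/2 ≤ e (k+1)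
  · have hρe' := rho_eq_one hc (by linarith)
    have hu' : u (k+1) = u k - α := by rw [hu, if_neg (by simp [hρe']), hρe']; simp
    have hρu' : rho (u (k+1)) = -1 := rho_eq_neg_one (by linarith) (by linarith)
    obtain ⟨he'', hu''⟩ := h (k+1)
    rw [hρu'] at he''
    push_cast at he''
    have hρe'' := rho_eq_zero (abs_lt.2 ⟨by linarith, by linarith⟩ : |e (k+1+1)| < 1/2)
    refine ⟨by linarith, by linarith, ?_⟩
    rw [hu'', if_pos hρe'', hρu', hρe', hρe'']
    simp
  · have hρe' := rho_eq_zero (abs_lt.2 ⟨by linarith, not_le.1 hc⟩)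
    refine h.onCycle_succ hα₁ hα₂ hd₀ hd ⟨by linarith, by linarith, ?_⟩
    rw [hu, if_pos hρe', hρe']
    simp

lemma Traj.e_add_eq_sub_sum (h : Traj α d e u) {t : ℕ} (hcyc : ∀ j, t ≤ j → OnCycle α d e u j)
    (i : ℕ) : e (t+i) = e t + i * d - ∑ j ∈ Finset.Ico t (t+i), (rho (e j) : ℝ) := by
  induction i with
  | zero => simp
  | succ i ih =>
    rw [← add_assoc, h.e_succ_of_onCycle hα₁ hα₂ hd₀ hd (hcyc _ (Nat.le_add_right t i)),
      Finset.sum_Ico_succ_top (Nat.le_add_right t i), ih]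
    push_cast
    ring

lemma Traj.e_add_eq_and_sum_rho_eq (h : Traj α d e u) {n m t : ℕ} (hmd : (m : ℝ) * d = n)
    (hcyc : ∀ j, t ≤ j → OnCycle α d e u j) :
    e (t+m) = e t ∧ ∑ j ∈ Finset.Ico t (t+m), rho (e j) = n := by
  have hsum := h.e_add_eq_sub_sum hα₁ hα₂ hd₀ hd hcyc m
  rw [hmd, ← Int.cast_sum] at hsum
  set z : ℤ := n - ∑ j ∈ Finset.Ico t (t+m), rho (e j) with hz
  have hdiff : e (t+m) - e t = z := by rw [hsum, hz]; push_cast; ring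
  obtain ⟨hlo, hhi, -⟩ := hcyc t le_rfl
  obtain ⟨hlo', hhi', -⟩ := hcyc (t+m) (Nat.le_add_right t m)
  have hz₀ : z = 0 := Int.abs_lt_one_iff.1 <| by
    rw [← Int.cast_lt (R := ℝ), Int.cast_abs, ← hdiff, Int.cast_one, abs_lt]
    constructor <;> linarith
  rw [hz₀, Int.cast_zero, sub_eq_zero] at hdiff
  exact ⟨hdiff, by omega⟩

lemma Traj.isLimitCycleFrom_add_two (h : Traj α d e u) {n m k : ℕ} (hmd : (m : ℝ) * d = n)
    (h9 : Cond9 α d e u k) : IsLimitCycleFrom d n m e u (k+2) := by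
  have hcyc : ∀ j, k + 2 ≤ j → OnCycle α d e u j := fun j hj =>
    Nat.le_induction (h.onCycle_add_two hα₁ hα₂ hd₀ hd h9)
      (fun j _ => h.onCycle_succ hα₁ hα₂ hd₀ hd) j hj
  have hwin : ∀ t, k + 2 ≤ t → e (t+m) = e t ∧ ∑ j ∈ Finset.Ico t (t+m), rho (e j) = n :=
    fun t ht => h.e_add_eq_and_sum_rho_eq hα₁ hα₂ hd₀ hd hmd fun j hj => hcyc j (ht.trans hj)
  refine ⟨fun j hj => ⟨(hwin j hj).1, ?_⟩, fun t ht => ?_⟩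
  · rw [(hcyc (j+m) (hj.trans (Nat.le_add_right j m))).2.2, (hwin j hj).1, (hcyc j hj).2.2]
  have hρ : ∀ j ∈ Finset.Ico t (t+m), rho (e j) = 0 ∨ rho (e j) = 1 := fun j hj =>
    ((hcyc j (ht.trans (Finset.mem_Ico.1 hj).1)).rho_e hd₀ hd).imp (·.2) (·.2)
  have hones := Finset.natCast_card_filter_eq_one_eq_sum hρ
  rw [(hwin t ht).2, Nat.cast_inj] at hones
  have hzeros : (Finset.Ico t (t+m)).filter (fun j => rho (e j) = 0) =
      (Finset.Ico t (t+m)).filter (fun j => ¬ rho (e j) = 1) :=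
    Finset.filter_congr fun j hj => by rcases hρ j hj with hj | hj <;> simp [hj]
  have hsplit := Finset.card_filter_add_card_filter_not
    (s := Finset.Ico t (t+m)) (p := fun j => rho (e j) = 1)
  rw [show rsign d = 1 from if_pos hd₀, hzeros]
  rw [Nat.card_Ico, hones] at hsplit
  omega

end PositiveDisturbance

open scoped Classical in
theorem stmt_4_general (α Δd : ℝ) (hα : 1 < α ∧ α < 3/2)
    (n m : ℕ) (hn : 1 ≤ n) (hm : n < m)
    (hΔ : |Δd| = (n : ℝ) / (m : ℝ)) (hΔhalf : |Δd| ≤ 1/2)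
    (e u : ℕ → ℝ) (htraj : Traj α Δd e u) (k : ℕ) (h9 : Cond9 α Δd e u k) :
    ∃ kb : ℕ, k < kb ∧
      (∀ j : ℕ, kb ≤ j → e (j+m) = e j ∧ u (j+m) = u j) ∧
      (∀ t : ℕ, kb ≤ t →
        ((Finset.Ico t (t+m)).filter (fun j => rho (e j) = rsign Δd)).card = n ∧
        ((Finset.Ico t (t+m)).filter (fun j => rho (e j) = 0)).card = m - n) := by
  have hα₁ : 1/2 ≤ α := by linarith [hα.1]
  have hm₀ : (0 : ℝ) < m := by exact_mod_cast (by omega : 0 < m)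
  have hd₀ : 0 < |Δd| := by rw [hΔ]; exact div_pos (by exact_mod_cast hn) hm₀
  have hmd : (m : ℝ) * |Δd| = n := by rw [hΔ]; field_simp
  refine ⟨k+2, by omega, ?_⟩
  rcases lt_or_gt_of_ne (abs_pos.1 hd₀) with hneg | hpos
  · rw [abs_of_neg hneg] at hd₀ hmd hΔhalf
    exact (htraj.neg.isLimitCycleFrom_add_two hα₁ hα.2 hd₀ hΔhalf hmd h9.neg).of_neg
  · rw [abs_of_pos hpos] at hd₀ hmd hΔhalf
    exact htraj.isLimitCycleFrom_add_two hα₁ hα.2 hd₀ hΔhalf hmd h9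

open scoped Classical in
theorem stmt_4 (α Δd : ℝ) (hα : 1 < α ∧ α < 3/2)
    (n m : ℕ) (hnm : Nat.Coprime n m) (hn : 1 ≤ n) (hm : n < m)
    (hΔ : |Δd| = (n : ℝ) / (m : ℝ)) (hΔhalf : |Δd| ≤ 1/2)
    (e u : ℕ → ℝ) (htraj : Traj α Δd e u) (k : ℕ) (h9 : Cond9 α Δd e u k) :
    ∃ kb : ℕ, k < kb ∧
      (∀ j : ℕ, kb ≤ j → e (j+m) = e j ∧ u (j+m) = u j) ∧
      (∀ t : ℕ, kb ≤ t →
        ((Finset.Ico t (t+m)).filter (fun j => rho (e j) = rsign Δd)).card = n ∧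
        ((Finset.Ico t (t+m)).filter (fun j => rho (e j) = 0)).card = m - n) :=
  stmt_4_general α Δd hα n m hn hm hΔ hΔhalf e u htraj k h9
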